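/- For a, b ≥ 0, the Marcum Q-function satisfies Q₁(a,b) ≤ (I₀(ab)/exp(ab)) · { exp(−(b−a)²/2) + a√(π/2)·erfc((b−a)/√2) }. -/

import Mathlib

/-!
Since `exp (-(x² + a²)/2) = exp (-(x - a)²/2) · exp (-a x)`, the integrand of `Q₁(a, b)` is
`x exp (-(x - a)²/2)` times `I₀(a x) e^{-a x}`. With `pₙ = (x/2)ⁿ/n!` one has `I₀ = ∑ pₙ²` and
`I₀' = I₁ = ∑ pₙ pₙ₊₁ ≤ I₀` by AM-GM, so `t ↦ I₀(t) e^{-t}` is antitone and the second factor is at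
most `I₀(a b) e^{-a b}` for `x ≥ b`. What remains is the Gaussian integral
`∫_b^∞ x exp (-(x - a)²/2) dx = exp (-(b - a)²/2) + a √(π/2) erfc ((b - a)/√2)`.
-/

open MeasureTheory ProbabilityTheory Filter

noncomputable instance (M : ℕ) : MeasureSpace (EuclideanSpace ℂ (Fin M)) :=
  { volume := Measure.map (WithLp.toLp 2) (volume : Measure (Fin M → ℂ)) }
instance (M : ℕ) : BorelSpace (EuclideanSpace ℂ (Fin M)) :=
  inferInstance
instance (M : ℕ) : PolishSpace (EuclideanSpace ℂ (Fin M)) :=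
  inferInstance

/-- The circularly-symmetric complex Gaussian distribution `CN(μ, v)` on `ℂ`,
given by the density `z ↦ (π v)⁻¹ exp(-|z-μ|²/v)` w.r.t. Lebesgue measure. -/
noncomputable def cn (μ : ℂ) (v : ℝ) : Measure ℂ :=
  volume.withDensity fun z =>
    ENNReal.ofReal ((Real.pi * v)⁻¹ * Real.exp (-(‖z - μ‖) ^ 2 / v))

/-- The circularly-symmetric complex Gaussian distribution `CN(μ, v • I_M)` on `ℂ^M`. -/
noncomputable def cnVec (M : ℕ) (μ : EuclideanSpace ℂ (Fin M)) (v : ℝ) :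
    Measure (EuclideanSpace ℂ (Fin M)) :=
  volume.withDensity fun x =>
    ENNReal.ofReal (((Real.pi * v) ^ M)⁻¹ * Real.exp (-‖x - μ‖ ^ 2 / v))

/-- The modified Bessel function of the first kind of order zero,
`I₀(x) = ∑ (x/2)^(2n) / (n!)²`. -/
noncomputable def besselI0 (x : ℝ) : ℝ :=
  ∑' n : ℕ, (x / 2) ^ (2 * n) / ((Nat.factorial n : ℝ)) ^ 2

/-- The first-order Marcum Q-function,
`Q₁(a,b) = ∫_b^∞ x exp(−(x²+a²)/2) I₀(ax) dx`. -/
noncomputable def marcumQ1 (a b : ℝ) : ℝ :=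
  ∫ x in Set.Ioi b, x * Real.exp (-(x ^ 2 + a ^ 2) / 2) * besselI0 (a * x)

/-- The complementary error function `erfc(x) = (2/√π) ∫_x^∞ exp(−t²) dt`. -/
noncomputable def erfc (x : ℝ) : ℝ :=
  (2 / Real.sqrt Real.pi) * ∫ t in Set.Ioi x, Real.exp (-t ^ 2)

open Real Set
open scoped Nat

noncomputable def besselI1 (x : ℝ) : ℝ :=
  ∑' n : ℕ, (x / 2) ^ (2 * n + 1) / ((n ! : ℝ) * ((n + 1)! : ℝ))

lemma one_le_factorial_cast (n : ℕ) : (1 : ℝ) ≤ n ! :=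
  mod_cast Nat.one_le_of_lt (Nat.factorial_pos n)

lemma summable_besselI0_term (x : ℝ) :
    Summable fun n : ℕ => (x / 2) ^ (2 * n) / (n ! : ℝ) ^ 2 := by
  refine .of_nonneg_of_le (fun n => by rw [pow_mul]; positivity) (fun n => ?_)
    (Real.summable_pow_div_factorial ((x / 2) ^ 2))
  rw [pow_mul]
  gcongr
  exact le_self_pow₀ (one_le_factorial_cast n) two_ne_zero

lemma besselI0_nonneg (x : ℝ) : 0 ≤ besselI0 x :=
  tsum_nonneg fun n => by rw [pow_mul]; positivity

lemma summable_besselI1_term (x : ℝ) :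
    Summable fun n : ℕ => (x / 2) ^ (2 * n + 1) / ((n ! : ℝ) * ((n + 1)! : ℝ)) := by
  refine .of_norm_bounded ((Real.summable_pow_div_factorial ((x / 2) ^ 2)).mul_left |x / 2|)
    (fun n => ?_)
  rw [norm_div, norm_pow, Real.norm_eq_abs, Real.norm_of_nonneg (by positivity), pow_succ,
    pow_mul, sq_abs, mul_comm _ |x / 2|, mul_div_assoc]
  gcongr
  exact le_mul_of_one_le_right (by positivity) (one_le_factorial_cast _)

lemma besselI0_eq_one_add (x : ℝ) :
    besselI0 x = 1 + ∑' n : ℕ, (x / 2) ^ (2 * (n + 1)) / ((n + 1)! : ℝ) ^ 2 := by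
  rw [besselI0, (summable_besselI0_term x).tsum_eq_zero_add]
  simp

lemma hasDerivAt_besselI0_term_succ (n : ℕ) (y : ℝ) :
    HasDerivAt (fun z : ℝ => (z / 2) ^ (2 * (n + 1)) / ((n + 1)! : ℝ) ^ 2)
      ((y / 2) ^ (2 * n + 1) / ((n ! : ℝ) * ((n + 1)! : ℝ))) y := by
  refine ((((hasDerivAt_id' y).div_const 2).pow (2 * (n + 1))).div_const
    (((n + 1)! : ℝ) ^ 2)).congr_deriv ?_
  rw [show 2 * (n + 1) - 1 = 2 * n + 1 by omega, Nat.factorial_succ]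
  push_cast
  field_simp

lemma hasDerivAt_besselI0 (x : ℝ) : HasDerivAt besselI0 (besselI1 x) x := by
  have hx : x ∈ Metric.ball (0 : ℝ) (|x| + 1) := by simp
  have hbound : ∀ (n : ℕ), ∀ y ∈ Metric.ball (0 : ℝ) (|x| + 1),
      ‖(y / 2) ^ (2 * n + 1) / ((n ! : ℝ) * ((n + 1)! : ℝ))‖
        ≤ ((|x| + 1) / 2) ^ (2 * n + 1) / ((n ! : ℝ) * ((n + 1)! : ℝ)) := by
    intro n y hy
    rw [mem_ball_zero_iff, Real.norm_eq_abs] at hy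
    rw [Real.norm_eq_abs, abs_div, abs_pow, abs_of_pos (by positivity : (0 : ℝ) < n ! * (n + 1)!),
      abs_div, abs_two]
    gcongr
  rw [funext besselI0_eq_one_add]
  exact (hasDerivAt_tsum_of_isPreconnected (summable_besselI1_term (|x| + 1)) Metric.isOpen_ball
    (convex_ball 0 _).isPreconnected (fun n y _ => hasDerivAt_besselI0_term_succ n y) hbound hx
    ((summable_nat_add_iff 1).2 (summable_besselI0_term x)) hx).const_add 1

lemma besselI1_le_besselI0 (x : ℝ) : besselI1 x ≤ besselI0 x := by
  set p : ℕ → ℝ := fun n => (x / 2) ^ n / (n ! : ℝ)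
  have hp_sq : (fun n => p n ^ 2) = fun n : ℕ => (x / 2) ^ (2 * n) / (n ! : ℝ) ^ 2 := by
    ext n
    rw [div_pow, ← pow_mul, mul_comm n 2]
  have hp_mul : (fun n => p n * p (n + 1))
      = fun n : ℕ => (x / 2) ^ (2 * n + 1) / ((n ! : ℝ) * ((n + 1)! : ℝ)) := by
    ext n
    rw [div_mul_div_comm, ← pow_add, show n + (n + 1) = 2 * n + 1 by ring]
  have hsq : Summable fun n => p n ^ 2 := hp_sq ▸ summable_besselI0_term x
  have hsq_succ : Summable fun n => p (n + 1) ^ 2 := (summable_nat_add_iff 1).2 hsq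
  calc besselI1 x = ∑' n, p n * p (n + 1) := by rw [besselI1, hp_mul]
    _ ≤ ∑' n, (p n ^ 2 + p (n + 1) ^ 2) / 2 :=
      (hp_mul ▸ summable_besselI1_term x).tsum_le_tsum
        (fun n => by linarith [two_mul_le_add_sq (p n) (p (n + 1))])
        ((hsq.add hsq_succ).div_const 2)
    _ = (p 0 ^ 2 + ∑' n, p (n + 1) ^ 2 + ∑' n, p (n + 1) ^ 2) / 2 := by
      rw [tsum_div_const, hsq.tsum_add hsq_succ, hsq.tsum_eq_zero_add]
    _ ≤ p 0 ^ 2 + ∑' n, p (n + 1) ^ 2 := by linarith [sq_nonneg (p 0)]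
    _ = besselI0 x := by rw [← hsq.tsum_eq_zero_add, hp_sq, besselI0]

lemma antitone_besselI0_mul_exp_neg : Antitone fun t => besselI0 t * exp (-t) := by
  have hderiv (t : ℝ) : HasDerivAt (fun t => besselI0 t * exp (-t))
      ((besselI1 t - besselI0 t) * exp (-t)) t := by
    refine ((hasDerivAt_besselI0 t).mul (hasDerivAt_neg t).exp).congr_deriv ?_
    ring
  refine antitone_of_deriv_nonpos (fun t => (hderiv t).differentiableAt) (fun t => ?_)
  rw [(hderiv t).deriv]
  exact mul_nonpos_of_nonpos_of_nonneg (sub_nonpos.2 (besselI1_le_besselI0 t)) (exp_pos _).le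

lemma setIntegral_Ioi_comp_sub_right {E : Type*} [NormedAddCommGroup E] [NormedSpace ℝ E]
    (f : ℝ → E) (a b : ℝ) : ∫ x in Ioi b, f (x - a) = ∫ y in Ioi (b - a), f y := by
  rw [← integral_indicator measurableSet_Ioi, ← integral_indicator measurableSet_Ioi,
    ← integral_sub_right_eq_self ((Ioi (b - a)).indicator f) a]
  congr 1 with x
  simp [indicator_apply]

lemma integrable_exp_neg_sq_div_two : Integrable fun y : ℝ => exp (-y ^ 2 / 2) :=
  (integrable_exp_neg_mul_sq (b := 1 / 2) (by norm_num)).congr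
    (.of_forall fun y => by ring_nf)

lemma integrable_mul_exp_neg_sq_div_two : Integrable fun y : ℝ => y * exp (-y ^ 2 / 2) :=
  (integrable_mul_exp_neg_mul_sq (b := 1 / 2) (by norm_num)).congr
    (.of_forall fun y => by ring_nf)

lemma integrable_mul_exp_neg_sub_sq_div_two (a : ℝ) :
    Integrable fun x : ℝ => x * exp (-(x - a) ^ 2 / 2) :=
  ((integrable_mul_exp_neg_sq_div_two.comp_sub_right a).add
    ((integrable_exp_neg_sq_div_two.comp_sub_right a).const_mul a)).congr
    (.of_forall fun x => by simp only [Pi.add_apply]; ring)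

lemma integral_Ioi_mul_exp_neg_sq_div_two (c : ℝ) :
    ∫ y in Ioi c, y * exp (-y ^ 2 / 2) = exp (-c ^ 2 / 2) := by
  have hderiv (y : ℝ) (_ : y ∈ Ici c) :
      HasDerivAt (fun y => -exp (-y ^ 2 / 2)) (y * exp (-y ^ 2 / 2)) y := by
    refine ((hasDerivAt_pow 2 y).neg.div_const 2).exp.neg.congr_deriv ?_
    simp only [Pi.neg_apply]
    ring
  have hlim : Tendsto (fun y : ℝ => -exp (-y ^ 2 / 2)) atTop (nhds 0) := by
    have : Tendsto (fun y : ℝ => -y ^ 2 / 2) atTop atBot :=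
      (tendsto_neg_atTop_atBot.comp (tendsto_pow_atTop two_ne_zero)).atBot_div_const two_pos
    simpa using (tendsto_exp_atBot.comp this).neg
  rw [integral_Ioi_of_hasDerivAt_of_tendsto' hderiv integrable_mul_exp_neg_sq_div_two.integrableOn
    hlim]
  ring

lemma integral_Ioi_exp_neg_sq_div_two (c : ℝ) :
    ∫ y in Ioi c, exp (-y ^ 2 / 2) = √(π / 2) * erfc (c / √2) := by
  have hscale (y : ℝ) : exp (-((√2)⁻¹ * y) ^ 2) = exp (-y ^ 2 / 2) := by
    rw [mul_pow, inv_pow, sq_sqrt zero_le_two]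
    ring_nf
  calc ∫ y in Ioi c, exp (-y ^ 2 / 2) = ∫ y in Ioi c, exp (-((√2)⁻¹ * y) ^ 2) := by
        simp_rw [hscale]
    _ = √2 * ∫ t in Ioi (c / √2), exp (-t ^ 2) := by
        rw [integral_comp_mul_left_Ioi (fun t => exp (-t ^ 2)) c (by positivity), inv_inv,
          smul_eq_mul, inv_mul_eq_div]
    _ = √(π / 2) * erfc (c / √2) := by
        rw [erfc, sqrt_div' _ zero_le_two, ← mul_assoc]
        congr 1
        have : √π ≠ 0 := (sqrt_pos.2 pi_pos).ne'
        field_simp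
        rw [sq_sqrt zero_le_two]

lemma integral_Ioi_mul_exp_neg_sub_sq_div_two (a b : ℝ) :
    ∫ x in Ioi b, x * exp (-(x - a) ^ 2 / 2)
      = exp (-(b - a) ^ 2 / 2) + a * √(π / 2) * erfc ((b - a) / √2) := by
  calc ∫ x in Ioi b, x * exp (-(x - a) ^ 2 / 2)
      = ∫ y in Ioi (b - a), (y * exp (-y ^ 2 / 2) + a * exp (-y ^ 2 / 2)) := by
        rw [← setIntegral_Ioi_comp_sub_right _ a b]
        congr with x
        ring
    _ = exp (-(b - a) ^ 2 / 2) + a * √(π / 2) * erfc ((b - a) / √2) := by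
        rw [integral_add integrable_mul_exp_neg_sq_div_two.integrableOn
          (integrable_exp_neg_sq_div_two.integrableOn.const_mul a), integral_const_mul,
          integral_Ioi_mul_exp_neg_sq_div_two, integral_Ioi_exp_neg_sq_div_two, mul_assoc]

lemma mul_exp_mul_besselI0_le {a b x : ℝ} (ha : 0 ≤ a) (hx : 0 ≤ x) (hbx : b ≤ x) :
    x * exp (-(x ^ 2 + a ^ 2) / 2) * besselI0 (a * x)
      ≤ besselI0 (a * b) / exp (a * b) * (x * exp (-(x - a) ^ 2 / 2)) := by
  have hsplit : exp (-(x ^ 2 + a ^ 2) / 2) = exp (-(x - a) ^ 2 / 2) * exp (-(a * x)) := by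
    rw [← exp_add]
    ring_nf
  have hmono := antitone_besselI0_mul_exp_neg (mul_le_mul_of_nonneg_left hbx ha)
  calc x * exp (-(x ^ 2 + a ^ 2) / 2) * besselI0 (a * x)
      = x * exp (-(x - a) ^ 2 / 2) * (besselI0 (a * x) * exp (-(a * x))) := by
        rw [hsplit]
        ring
    _ ≤ x * exp (-(x - a) ^ 2 / 2) * (besselI0 (a * b) * exp (-(a * b))) := by gcongr
    _ = besselI0 (a * b) / exp (a * b) * (x * exp (-(x - a) ^ 2 / 2)) := by
        rw [exp_neg]
        ring

/-- tighter upper bound on the Marcum Q-function. For `a, b ≥ 0`,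
`Q₁(a,b) ≤ (I₀(ab)/exp(ab)) { exp(−(b−a)²/2) + a√(π/2) erfc((b−a)/√2) }`. -/
theorem marcumQ1_le_besselI0_bound (a b : ℝ) (ha : 0 ≤ a) (hb : 0 ≤ b) :
    marcumQ1 a b
      ≤ (besselI0 (a * b) / Real.exp (a * b))
          * (Real.exp (-(b - a) ^ 2 / 2)
            + a * Real.sqrt (Real.pi / 2) * erfc ((b - a) / Real.sqrt 2)) := by
  set C := besselI0 (a * b) / exp (a * b)
  have hnonneg : ∀ x ∈ Ioi b, 0 ≤ x * exp (-(x ^ 2 + a ^ 2) / 2) * besselI0 (a * x) :=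
    fun x hx => mul_nonneg (mul_nonneg (hb.trans hx.le) (exp_pos _).le) (besselI0_nonneg _)
  calc marcumQ1 a b ≤ ∫ x in Ioi b, C * (x * exp (-(x - a) ^ 2 / 2)) :=
        integral_mono_of_nonneg (ae_restrict_of_forall_mem measurableSet_Ioi hnonneg)
          ((integrable_mul_exp_neg_sub_sq_div_two a).integrableOn.const_mul C)
          (ae_restrict_of_forall_mem measurableSet_Ioi fun x hx =>
            mul_exp_mul_besselI0_le ha (hb.trans hx.le) hx.le)
    _ = C * (exp (-(b - a) ^ 2 / 2) + a * √(π / 2) * erfc ((b - a) / √2)) := by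
        rw [integral_const_mul, integral_Ioi_mul_exp_neg_sub_sq_div_two]
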